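/- Let Λ be a scale such that Σₙ ∩ Δₙ^{3λ(n)} = ∅ for all n ≥ 1. Then for any element g with a spike decomposition of height n, the prefix a in any spike decomposition g = a·σ·b has height strictly less than n: if a itself admits a spike decomposition of height m, then m < n. (Height-decrease along prefixes.) -/

import Mathlib

open scoped Pointwise

variable {G : Type*} [Group G]

/-- The set of products of at most `k` elements of `D` (including the empty product). -/
def ball (D : Set G) (k : ℕ) : Set G :=
  {g | ∃ l : List G, (∀ x ∈ l, x ∈ D) ∧ l.length ≤ k ∧ l.prod = g}

/-- `Δₙ`: the union of the spiking sets `Σᵢ` (for `1 ≤ i < n`), the filling sets `Aᵢ`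
(for `i < n`), and their inverses. -/
def Delta (S A : ℕ → Set G) (n : ℕ) : Set G :=
  (⋃ i ∈ Set.Ico 1 n, (S i ∪ (S i)⁻¹)) ∪ (⋃ i ∈ Set.Iio n, (A i ∪ (A i)⁻¹))

/-- A spike decomposition of `g` of height `n`: `g = a·σ·b` with `σ ∈ Σₙ` and
`a, b ∈ Δₙ^{λ(n)}`. -/
def IsSpikeDecomp (lam : ℕ → ℕ) (S A : ℕ → Set G) (g : G) (n : ℕ) (a σ b : G) : Prop :=
  1 ≤ n ∧ σ ∈ S n ∧ a ∈ ball (Delta S A n) (lam n) ∧ b ∈ ball (Delta S A n) (lam n) ∧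
    g = a * σ * b

/-! If the prefix `a` of a height-`n` decomposition had a decomposition `a = a'·σ'·b'` of height
`m ≥ n`, then `a ∈ Δₙ^{λ(n)} ⊆ Δₘ^{λ(m)}`, so `σ' = a'⁻¹·a·b'⁻¹ ∈ Δₘ^{3λ(m)}`, contradicting the
separation hypothesis at height `m`. -/

lemma ball_mono {D D' : Set G} (hD : D ⊆ D') {k k' : ℕ} (hk : k ≤ k') :
    ball D k ⊆ ball D' k' := by
  rintro g ⟨l, hl, hlen, rfl⟩
  exact ⟨l, fun x hx => hD (hl x hx), hlen.trans hk, rfl⟩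

lemma mul_mem_ball {D : Set G} {k k' : ℕ} {x y : G} (hx : x ∈ ball D k) (hy : y ∈ ball D k') :
    x * y ∈ ball D (k + k') := by
  obtain ⟨l, hl, hlen, rfl⟩ := hx
  obtain ⟨l', hl', hlen', rfl⟩ := hy
  refine ⟨l ++ l', fun z hz => ?_, by simpa using Nat.add_le_add hlen hlen', List.prod_append⟩
  rcases List.mem_append.mp hz with hz | hz
  exacts [hl z hz, hl' z hz]

lemma inv_mem_ball {D : Set G} (hD : ∀ x ∈ D, x⁻¹ ∈ D) {k : ℕ} {x : G} (hx : x ∈ ball D k) :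
    x⁻¹ ∈ ball D k := by
  obtain ⟨l, hl, hlen, rfl⟩ := hx
  refine ⟨(l.map (·⁻¹)).reverse, ?_, by simpa using hlen, (List.prod_inv_reverse l).symm⟩
  simp only [List.mem_reverse, List.mem_map]
  rintro _ ⟨y, hy, rfl⟩
  exact hD y (hl y hy)

lemma inv_mem_Delta {S A : ℕ → Set G} {n : ℕ} {x : G} (hx : x ∈ Delta S A n) :
    x⁻¹ ∈ Delta S A n := by
  have symm : ∀ {T : Set G}, x ∈ T ∪ T⁻¹ → x⁻¹ ∈ T ∪ T⁻¹ := fun hx =>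
    hx.symm.imp (fun h => h) (fun h => Set.inv_mem_inv.mpr h)
  simp only [Delta, Set.mem_union, Set.mem_iUnion] at hx ⊢
  rcases hx with ⟨i, hi, hx⟩ | ⟨i, hi, hx⟩
  exacts [.inl ⟨i, hi, symm hx⟩, .inr ⟨i, hi, symm hx⟩]

lemma Delta_mono {S A : ℕ → Set G} {n m : ℕ} (h : n ≤ m) : Delta S A n ⊆ Delta S A m := by
  apply Set.union_subset_union <;>
    exact Set.biUnion_subset_biUnion_left fun i hi => by
      simp only [Set.mem_Ico, Set.mem_Iio] at hi ⊢
      omega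

lemma IsSpikeDecomp.spike_mem_ball {lam : ℕ → ℕ} {S A : ℕ → Set G} {g : G} {n : ℕ}
    {a σ b : G} (h : IsSpikeDecomp lam S A g n a σ b) (hg : g ∈ ball (Delta S A n) (lam n)) :
    σ ∈ ball (Delta S A n) (3 * lam n) := by
  obtain ⟨-, -, ha, hb, rfl⟩ := h
  have hσ : σ = a⁻¹ * (a * σ * b) * b⁻¹ := by group
  rw [hσ, show 3 * lam n = lam n + lam n + lam n by ring]
  exact mul_mem_ball (mul_mem_ball (inv_mem_ball (fun _ => inv_mem_Delta) ha) hg)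
    (inv_mem_ball (fun _ => inv_mem_Delta) hb)

lemma IsSpikeDecomp.notMem_ball {lam : ℕ → ℕ} {S A : ℕ → Set G}
    (hsep : ∀ n, 1 ≤ n → ∀ σ ∈ S n, σ ∉ ball (Delta S A n) (3 * lam n))
    {g : G} {n : ℕ} {a σ b : G} (h : IsSpikeDecomp lam S A g n a σ b) :
    g ∉ ball (Delta S A n) (lam n) := fun hg =>
  hsep n h.1 σ h.2.1 (h.spike_mem_ball hg)

/-- Height decrease along prefixes: if `Σₙ ∩ Δₙ^{3λ(n)} = ∅` for all `n ≥ 1`, then the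
prefix of a height-`n` spike decomposition has height strictly less than `n`. -/
theorem prefix_height_lt
    (lam : ℕ → ℕ) (S A : ℕ → Set G) (hlam : Monotone lam)
    (hsep : ∀ n, 1 ≤ n → ∀ σ ∈ S n, σ ∉ ball (Delta S A n) (3 * lam n))
    (g : G) (n : ℕ) (a σ b : G) (h : IsSpikeDecomp lam S A g n a σ b)
    (m : ℕ) (a' σ' b' : G) (h' : IsSpikeDecomp lam S A a m a' σ' b') :
    m < n := by
  by_contra! hnm
  exact h'.notMem_ball hsep (ball_mono (Delta_mono hnm) (hlam hnm) h.2.2.1)
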